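/- For x in the closed interval [29/56, 9/14], the tetrahedra T0 = conv{r1,r2,r3,r4} and its translate T0 + d_x − a (where d_x = (1/2)b + (1/2)c + x·a) have disjoint interiors, where r1, r2, r3, r4, a, b, c are as in the dimer-double-lattice construction. -/

import Mathlib

noncomputable section

abbrev E3 := EuclideanSpace ℝ (Fin 3)

def pt (x y z : ℝ) : E3 := (WithLp.equiv 2 (Fin 3 → ℝ)).symm ![x, y, z]

def va : E3 := pt (2 * Real.sqrt 7 / 5) 0 0
def vb : E3 := pt 0 (Real.sqrt 3 / 2) 0
def vc : E3 := pt 0 0 (13 * Real.sqrt (3 / 14) / 5)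

def r1 : E3 := (27 / 28 : ℝ) • va - (7 / 30 : ℝ) • vb + (10 / 39 : ℝ) • vc
def r2 : E3 := (1 / 4 : ℝ) • va - (9 / 10 : ℝ) • vb
def r3 : E3 := (1 / 14 : ℝ) • va + (1 / 10 : ℝ) • vb + (5 / 13 : ℝ) • vc
def r4 : E3 := (3 / 7 : ℝ) • va + (1 / 10 : ℝ) • vb - (5 / 13 : ℝ) • vc

def d (x : ℝ) : E3 := (1 / 2 : ℝ) • vb + (1 / 2 : ℝ) • vc + x • va

def T0 : Set E3 := convexHull ℝ {r1, r2, r3, r4}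

/-- Separating linear functional. -/
def sf : E3 →L[ℝ] ℝ :=
  (-4 * Real.sqrt 7) • EuclideanSpace.proj (0 : Fin 3) +
    (14 * Real.sqrt 3 / 3) • EuclideanSpace.proj (1 : Fin 3) +
    (5 * Real.sqrt 42 / 3) • EuclideanSpace.proj (2 : Fin 3)

lemma sf_pt (x y z : ℝ) :
    sf (pt x y z) = (-4 * Real.sqrt 7) * x + (14 * Real.sqrt 3 / 3) * y +
      (5 * Real.sqrt 42 / 3) * z := by
  simp [sf, pt, PiLp.proj_apply, WithLp.equiv_symm_apply, PiLp.toLp_apply]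

lemma sf_va : sf va = -56 / 5 := by
  have h7 : Real.sqrt 7 * Real.sqrt 7 = 7 := Real.mul_self_sqrt (by norm_num)
  rw [va, sf_pt]
  linear_combination (-8 / 5 : ℝ) * h7

lemma sf_vb : sf vb = 7 := by
  have h3 : Real.sqrt 3 * Real.sqrt 3 = 3 := Real.mul_self_sqrt (by norm_num)
  rw [vb, sf_pt]
  linear_combination (7 / 3 : ℝ) * h3

lemma sf_vc : sf vc = 13 := by
  have h42 : Real.sqrt 42 * Real.sqrt (3 / 14) = 3 := by
    rw [← Real.sqrt_mul (by norm_num : (0:ℝ) ≤ 42)]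
    rw [show (42 : ℝ) * (3 / 14) = 3 ^ 2 by norm_num, Real.sqrt_sq (by norm_num)]
  rw [vc, sf_pt]
  linear_combination (13 / 3 : ℝ) * h42

lemma sf_r1 : sf r1 = -91 / 10 := by
  rw [r1]; rw [map_add, map_sub, map_smul, map_smul, map_smul, sf_va, sf_vb, sf_vc]
  norm_num

lemma sf_r2 : sf r2 = -91 / 10 := by
  rw [r2]; rw [map_sub, map_smul, map_smul, sf_va, sf_vb]
  norm_num

lemma sf_r3 : sf r3 = 49 / 10 := by
  rw [r3]; rw [map_add, map_add, map_smul, map_smul, map_smul, sf_va, sf_vb, sf_vc]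
  norm_num

lemma sf_r4 : sf r4 = -91 / 10 := by
  rw [r4]; rw [map_sub, map_add, map_smul, map_smul, map_smul, sf_va, sf_vb, sf_vc]
  norm_num

lemma sf_ne_zero : sf ≠ 0 := by
  intro h
  have h1 : sf (pt 1 0 0) = 0 := by rw [h]; rfl
  rw [sf_pt] at h1
  have h7 : 0 < Real.sqrt 7 := Real.sqrt_pos.2 (by norm_num)
  nlinarith

lemma T0_le : T0 ⊆ sf ⁻¹' Set.Iic (49 / 10) := by
  apply convexHull_min _ ((convex_Iic ((49 : ℝ) / 10)).linear_preimage (sf : E3 →ₗ[ℝ] ℝ))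
  rintro p hp
  simp only [Set.mem_insert_iff, Set.mem_singleton_iff] at hp
  rcases hp with rfl | rfl | rfl | rfl <;>
    simp only [Set.mem_preimage, Set.mem_Iic, ContinuousLinearMap.coe_coe, sf_r1, sf_r2, sf_r3,
      sf_r4] <;> norm_num

lemma T0_ge : T0 ⊆ sf ⁻¹' Set.Ici (-91 / 10) := by
  apply convexHull_min _ ((convex_Ici ((-91 : ℝ) / 10)).linear_preimage (sf : E3 →ₗ[ℝ] ℝ))
  rintro p hp
  simp only [Set.mem_insert_iff, Set.mem_singleton_iff] at hp
  rcases hp with rfl | rfl | rfl | rfl <;>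
    simp only [Set.mem_preimage, Set.mem_Ici, ContinuousLinearMap.coe_coe, sf_r1, sf_r2, sf_r3,
      sf_r4] <;> norm_num

theorem stmt_18 (x : ℝ) (hx : x ∈ Set.Icc (29 / 56 : ℝ) (9 / 14)) :
    Disjoint (interior T0) (interior ((fun p => p + (d x - va)) '' T0)) := by
  have hopen : IsOpenMap sf := sf.isOpenMap_of_ne_zero sf_ne_zero
  have hv0 : sf (d x - va) ≥ 14 := by
    rw [map_sub, d, map_add, map_add, map_smul, map_smul, map_smul, sf_va, sf_vb, sf_vc]
    simp only [smul_eq_mul]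
    have := hx.2
    nlinarith
  have hT' : (fun p => p + (d x - va)) '' T0 ⊆ sf ⁻¹' Set.Ici (49 / 10) := by
    rintro p ⟨q, hq, rfl⟩
    have hq' := T0_ge hq
    simp only [Set.mem_preimage, Set.mem_Ici] at hq' ⊢
    rw [map_add]
    linarith
  have h1 : interior T0 ⊆ sf ⁻¹' Set.Iio (49 / 10) := by
    have := interior_mono T0_le
    rwa [← hopen.preimage_interior_eq_interior_preimage sf.continuous, interior_Iic] at this
  have h2 : interior ((fun p => p + (d x - va)) '' T0) ⊆ sf ⁻¹' Set.Ioi (49 / 10) := by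
    have := interior_mono hT'
    rwa [← hopen.preimage_interior_eq_interior_preimage sf.continuous, interior_Ici] at this
  rw [Set.disjoint_left]
  intro p hp1 hp2
  have := h1 hp1
  have := h2 hp2
  simp only [Set.mem_preimage, Set.mem_Iio, Set.mem_Ioi] at *
  linarith

end
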